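/- (Optimality of the maximally entangled measurement for MDI steering.) Let {σ_{a|x}} be an assemblage on C^d, let {ω_y} be Hermitian operators on C^d spanning the Hermitian matrices, and for each family {F_{a|x} ≥ 0} write F_{a|x} = Σ_y β^{x,y}_a ω_y^⊤. Then for any POVM element 0 ≤ E ≤ 𝟙 on C^d ⊗ C^d, the value [Σ_{a,x} tr(E (σ_{a|x} ⊗ F_{a|x}^⊤))] / [sup_{τ∈LHS} Σ_{a,x} tr(E (τ_{a|x} ⊗ F_{a|x}^⊤))] is at most sup over {G_{a|x} ≥ 0} of [Σ_{a,x} tr(G_{a|x} σ_{a|x})] / [sup_{τ∈LHS} Σ_{a,x} tr(G_{a|x} τ_{a|x})], with equality attained by choosing E = |Φ+⟩⟨Φ+| the projection onto the maximally entangled state. -/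

import Mathlib

/-!
Contracting `E` with `Fᵀ` on the second factor turns the MDI value into a standard steering
value: `tr[E (τ ⊗ Fᵀ)] = tr[G τ]` for `G = tr_B[E (1 ⊗ Fᵀ)]`, and `G ≥ 0` because
`x⋆ G x = tr[E (x x⋆ ⊗ Fᵀ)] ≥ 0`. So every MDI ratio is one of the steering ratios, which are
bounded (by `d |A|`, comparing with deterministic strategies) and hence lie below their supremum.
For `E = |Φ+⟩⟨Φ+|` one gets `G = F / d`, which rescales numerator and denominator alike.
-/

open Matrix Kronecker BigOperators
open scoped ComplexOrder

/-- Unsteerable assemblage in deterministic LHS form. -/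
def IsUnsteerableDet {d : ℕ} {A X : Type} [Fintype A] [Fintype X]
    [DecidableEq A] [DecidableEq X]
    (τ : A → X → Matrix (Fin d) (Fin d) ℂ) : Prop :=
  ∃ ρ : (X → A) → Matrix (Fin d) (Fin d) ℂ,
    (∀ l, (ρ l).PosSemidef) ∧ (∑ l, (ρ l).trace = 1) ∧
    (∀ a x, τ a x = ∑ l, if l x = a then ρ l else 0)

/-- Value of witness `F` on assemblage `τ` in the standard steering scenario. -/
noncomputable def witVal {d : ℕ} {A X : Type} [Fintype A] [Fintype X]
    (F τ : A → X → Matrix (Fin d) (Fin d) ℂ) : ℝ :=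
  (∑ a, ∑ x, (F a x * τ a x).trace).re

/-- Best standard value over unsteerable assemblages. -/
noncomputable def lhsVal {d : ℕ} {A X : Type} [Fintype A] [Fintype X]
    [DecidableEq A] [DecidableEq X]
    (F : A → X → Matrix (Fin d) (Fin d) ℂ) : ℝ :=
  sSup {t : ℝ | ∃ τ : A → X → Matrix (Fin d) (Fin d) ℂ,
    IsUnsteerableDet τ ∧ t = witVal F τ}

/-- MDI value `∑_{a,x} tr[E (τ_{a|x} ⊗ F_{a|x}ᵀ)]` for the joint POVM element `E`. -/
noncomputable def mdiVal {d : ℕ} {A X : Type} [Fintype A] [Fintype X]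
    (E : Matrix (Fin d × Fin d) (Fin d × Fin d) ℂ)
    (F τ : A → X → Matrix (Fin d) (Fin d) ℂ) : ℝ :=
  (∑ a, ∑ x, (E * (τ a x ⊗ₖ (F a x)ᵀ)).trace).re

/-- Best MDI value over unsteerable assemblages. -/
noncomputable def mdiLhsVal {d : ℕ} {A X : Type} [Fintype A] [Fintype X]
    [DecidableEq A] [DecidableEq X]
    (E : Matrix (Fin d × Fin d) (Fin d × Fin d) ℂ)
    (F : A → X → Matrix (Fin d) (Fin d) ℂ) : ℝ :=
  sSup {t : ℝ | ∃ τ : A → X → Matrix (Fin d) (Fin d) ℂ,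
    IsUnsteerableDet τ ∧ t = mdiVal E F τ}

/-- The maximally entangled state `|Φ+⟩⟨Φ+|` on `ℂ^d ⊗ ℂ^d`. -/
noncomputable def maxEntProj (d : ℕ) : Matrix (Fin d × Fin d) (Fin d × Fin d) ℂ :=
  vecMulVec (fun p => if p.1 = p.2 then ((Real.sqrt d : ℝ) : ℂ)⁻¹ else 0)
    (star fun p => if p.1 = p.2 then ((Real.sqrt d : ℝ) : ℂ)⁻¹ else 0)

namespace Matrix

variable {𝕜 n : Type*} [RCLike 𝕜] [Fintype n]

lemma PosSemidef.trace_mul_nonneg {P Q : Matrix n n 𝕜} (hP : P.PosSemidef)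
    (hQ : Q.PosSemidef) : 0 ≤ (P * Q).trace := by
  classical
  open scoped MatrixOrder Matrix.Norms.L2Operator in
  obtain ⟨B, rfl⟩ := CStarAlgebra.nonneg_iff_eq_star_mul_self.mp hQ.nonneg
  rw [star_eq_conjTranspose, ← Matrix.mul_assoc, trace_mul_comm, ← Matrix.mul_assoc]
  exact (hP.mul_mul_conjTranspose_same B).trace_nonneg

/-- Every eigenvalue of a positive semidefinite matrix is at most its trace. -/
lemma PosSemidef.posSemidef_re_trace_smul_one_sub [DecidableEq n] {Q : Matrix n n 𝕜}
    (hQ : Q.PosSemidef) : (RCLike.re Q.trace • 1 - Q).PosSemidef := by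
  open scoped MatrixOrder in
  have hle : Q ≤ algebraMap ℝ (Matrix n n 𝕜) (RCLike.re Q.trace) := by
    rw [le_algebraMap_iff_spectrum_le hQ.isHermitian.isSelfAdjoint,
      hQ.isHermitian.spectrum_real_eq_range_eigenvalues]
    rintro _ ⟨i, rfl⟩
    rw [hQ.isHermitian.trace_eq_sum_eigenvalues, map_sum]
    simp only [RCLike.ofReal_re]
    exact Finset.single_le_sum (fun j _ => hQ.eigenvalues_nonneg j) (Finset.mem_univ i)
  simpa [Algebra.algebraMap_eq_smul_one] using Matrix.le_iff.mp hle

lemma PosSemidef.re_trace_mul_le {P Q : Matrix n n 𝕜} (hP : P.PosSemidef)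
    (hQ : Q.PosSemidef) : RCLike.re (P * Q).trace ≤ RCLike.re P.trace * RCLike.re Q.trace := by
  classical
  have h := (RCLike.nonneg_iff.mp (hP.trace_mul_nonneg hQ.posSemidef_re_trace_smul_one_sub)).1
  simp only [Matrix.mul_sub, Matrix.mul_smul, Matrix.mul_one, trace_sub, trace_smul, map_sub,
    RCLike.smul_re] at h
  linarith

end Matrix

section InducedWitness

variable {m n R : Type*} [Fintype n]

/-- The operator `tr_B[E (1 ⊗ Fᵀ)]` on the first factor. -/
def inducedWitness [NonUnitalNonAssocSemiring R] (E : Matrix (m × n) (m × n) R)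
    (F : Matrix n n R) : Matrix m m R :=
  of fun i j => ∑ k, ∑ l, E (i, k) (j, l) * F k l

lemma trace_inducedWitness_mul [Fintype m] [CommSemiring R] (E : Matrix (m × n) (m × n) R)
    (F : Matrix n n R) (τ : Matrix m m R) :
    (inducedWitness E F * τ).trace = (E * (τ ⊗ₖ Fᵀ)).trace := by
  simp only [trace, diag, mul_apply, inducedWitness, of_apply, kroneckerMap_apply,
    transpose_apply, Fintype.sum_prod_type, Finset.sum_mul]
  refine Finset.sum_congr rfl fun i _ => ?_
  rw [Finset.sum_comm]
  exact Finset.sum_congr rfl fun k _ => Finset.sum_congr rfl fun j _ =>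
    Finset.sum_congr rfl fun l _ => by ring

lemma posSemidef_inducedWitness [Fintype m] [RCLike R] {E : Matrix (m × n) (m × n) R}
    {F : Matrix n n R} (hE : E.PosSemidef) (hF : F.PosSemidef) :
    (inducedWitness E F).PosSemidef := by
  refine PosSemidef.of_dotProduct_mulVec_nonneg ?_ fun x => ?_
  · ext i j
    simp only [conjTranspose_apply, inducedWitness, of_apply, star_sum, star_mul']
    rw [Finset.sum_comm]
    exact Finset.sum_congr rfl fun k _ => Finset.sum_congr rfl fun l _ => by
      rw [hE.isHermitian.apply, hF.isHermitian.apply, mul_comm]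
  · rw [dotProduct_comm, ← trace_vecMulVec, ← mul_vecMulVec, trace_inducedWitness_mul]
    exact hE.trace_mul_nonneg ((posSemidef_vecMulVec_self_star x).kronecker hF.transpose)

end InducedWitness

/-- `|Φ+⟩⟨Φ+|` has entries `δ_ik δ_jl / d`. -/
lemma inducedWitness_maxEntProj (d : ℕ) (F : Matrix (Fin d) (Fin d) ℂ) :
    inducedWitness (maxEntProj d) F = (d : ℝ)⁻¹ • F := by
  have hsq :
      ((Real.sqrt d : ℝ) : ℂ)⁻¹ * (starRingEnd ℂ) ((Real.sqrt d : ℝ) : ℂ)⁻¹ = (d : ℂ)⁻¹ := by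
    rw [map_inv₀, Complex.conj_ofReal, ← mul_inv, ← Complex.ofReal_mul,
      Real.mul_self_sqrt (Nat.cast_nonneg d), Complex.ofReal_natCast]
  ext i j
  simp only [inducedWitness, maxEntProj, of_apply, vecMulVec_apply, Pi.star_apply,
    Complex.star_def, apply_ite (starRingEnd ℂ), map_zero, ite_mul, mul_ite, zero_mul, mul_zero,
    Finset.sum_ite_eq, Finset.mem_univ, if_true, hsq, Matrix.smul_apply, Complex.real_smul]
  push_cast
  rfl

section Steering

variable {d : ℕ} {A X : Type} [Fintype A] [Fintype X]

lemma mdiVal_eq_witVal (E : Matrix (Fin d × Fin d) (Fin d × Fin d) ℂ)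
    (F τ : A → X → Matrix (Fin d) (Fin d) ℂ) :
    mdiVal E F τ = witVal (fun a x => inducedWitness E (F a x)) τ := by
  simp only [mdiVal, witVal, trace_inducedWitness_mul]

lemma witVal_smul (c : ℝ) (G τ : A → X → Matrix (Fin d) (Fin d) ℂ) :
    witVal (c • G) τ = c * witVal G τ := by
  simp only [witVal, Pi.smul_apply, Matrix.smul_mul, trace_smul, ← Finset.smul_sum,
    Complex.smul_re, smul_eq_mul]

lemma mdiVal_maxEntProj (F τ : A → X → Matrix (Fin d) (Fin d) ℂ) :
    mdiVal (maxEntProj d) F τ = (d : ℝ)⁻¹ * witVal F τ := by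
  rw [mdiVal_eq_witVal, ← witVal_smul]
  simp only [inducedWitness_maxEntProj]
  rfl

lemma witVal_le_sum_re_trace {G τ : A → X → Matrix (Fin d) (Fin d) ℂ}
    (hG : ∀ a x, (G a x).PosSemidef) (hτ : ∀ a x, (τ a x).PosSemidef)
    (htr : ∀ x, (∑ a, τ a x).trace = 1) :
    witVal G τ ≤ ∑ a, ∑ x, (G a x).trace.re := by
  have hre_nonneg : ∀ {P : Matrix (Fin d) (Fin d) ℂ}, P.PosSemidef → 0 ≤ P.trace.re :=
    fun hP => (Complex.nonneg_iff.mp hP.trace_nonneg).1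
  have hτ_le : ∀ a x, (τ a x).trace.re ≤ 1 := fun a x =>
    calc (τ a x).trace.re ≤ ∑ b, (τ b x).trace.re :=
          Finset.single_le_sum (fun b _ => hre_nonneg (hτ b x)) (Finset.mem_univ a)
      _ = 1 := by rw [← Complex.re_sum, ← Matrix.trace_sum, htr, Complex.one_re]
  simp only [witVal, Complex.re_sum]
  refine Finset.sum_le_sum fun a _ => Finset.sum_le_sum fun x _ => ?_
  calc (G a x * τ a x).trace.re ≤ (G a x).trace.re * (τ a x).trace.re :=
        (hG a x).re_trace_mul_le (hτ a x)
    _ ≤ (G a x).trace.re := mul_le_of_le_one_right (hre_nonneg (hG a x)) (hτ_le a x)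

variable [DecidableEq A]

noncomputable def detAssemblage (d : ℕ) (g : X → A) : A → X → Matrix (Fin d) (Fin d) ℂ :=
  fun a x => if g x = a then (d : ℝ)⁻¹ • 1 else 0

lemma witVal_detAssemblage (G : A → X → Matrix (Fin d) (Fin d) ℂ) (g : X → A) :
    witVal G (detAssemblage d g) = (d : ℝ)⁻¹ * ∑ x, (G (g x) x).trace.re := by
  simp only [witVal, detAssemblage, mul_ite, Matrix.mul_smul, Matrix.mul_one, Matrix.mul_zero]
  rw [Finset.sum_comm]
  simp only [Complex.re_sum, apply_ite trace, trace_zero, Finset.sum_ite_eq, Finset.mem_univ,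
    if_true, trace_smul, Complex.smul_re, smul_eq_mul, Finset.mul_sum]

variable [DecidableEq X]

lemma mdiLhsVal_eq_lhsVal (E : Matrix (Fin d × Fin d) (Fin d × Fin d) ℂ)
    (F : A → X → Matrix (Fin d) (Fin d) ℂ) :
    mdiLhsVal E F = lhsVal (fun a x => inducedWitness E (F a x)) := by
  simp only [mdiLhsVal, lhsVal, mdiVal_eq_witVal]

open scoped Pointwise in
lemma lhsVal_smul {c : ℝ} (hc : 0 ≤ c) (G : A → X → Matrix (Fin d) (Fin d) ℂ) :
    lhsVal (c • G) = c * lhsVal G := by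
  have hset : {t : ℝ | ∃ τ, IsUnsteerableDet τ ∧ t = witVal (c • G) τ}
      = c • {t : ℝ | ∃ τ, IsUnsteerableDet τ ∧ t = witVal G τ} := by
    ext t
    simp only [Set.mem_smul_set, Set.mem_ofPred_eq, witVal_smul, smul_eq_mul]
    constructor
    · rintro ⟨τ, hτ, rfl⟩
      exact ⟨_, ⟨τ, hτ, rfl⟩, rfl⟩
    · rintro ⟨_, ⟨τ, hτ, rfl⟩, rfl⟩
      exact ⟨τ, hτ, rfl⟩
  rw [lhsVal, lhsVal, hset, Real.sSup_smul_of_nonneg hc, smul_eq_mul]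

lemma mdiLhsVal_maxEntProj (F : A → X → Matrix (Fin d) (Fin d) ℂ) :
    mdiLhsVal (maxEntProj d) F = (d : ℝ)⁻¹ * lhsVal F := by
  rw [mdiLhsVal_eq_lhsVal, ← lhsVal_smul (by positivity)]
  simp only [inducedWitness_maxEntProj]
  rfl

lemma IsUnsteerableDet.posSemidef {τ : A → X → Matrix (Fin d) (Fin d) ℂ}
    (hτ : IsUnsteerableDet τ) (a : A) (x : X) : (τ a x).PosSemidef := by
  obtain ⟨ρ, hρ, -, hτ⟩ := hτ
  rw [hτ a x]
  refine posSemidef_sum _ fun l _ => ?_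
  split_ifs
  exacts [hρ l, .zero]

lemma IsUnsteerableDet.trace_sum {τ : A → X → Matrix (Fin d) (Fin d) ℂ}
    (hτ : IsUnsteerableDet τ) (x : X) : (∑ a, τ a x).trace = 1 := by
  obtain ⟨ρ, -, hρ, hτ⟩ := hτ
  simp only [hτ]
  rw [Finset.sum_comm]
  simpa only [Finset.sum_ite_eq, Finset.mem_univ, if_true, Matrix.trace_sum] using hρ

lemma bddAbove_witVal_isUnsteerableDet {G : A → X → Matrix (Fin d) (Fin d) ℂ}
    (hG : ∀ a x, (G a x).PosSemidef) :
    BddAbove {t : ℝ | ∃ τ, IsUnsteerableDet τ ∧ t = witVal G τ} := by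
  refine ⟨∑ a, ∑ x, (G a x).trace.re, ?_⟩
  rintro _ ⟨τ, hτ, rfl⟩
  exact witVal_le_sum_re_trace hG hτ.posSemidef hτ.trace_sum

lemma pos_of_lhsVal_pos {G : A → X → Matrix (Fin d) (Fin d) ℂ} (h : 0 < lhsVal G) : 0 < d := by
  obtain ⟨_, _, ⟨ρ, -, hρ, -⟩, -⟩ :
      {t : ℝ | ∃ τ, IsUnsteerableDet τ ∧ t = witVal G τ}.Nonempty := by
    by_contra hempty
    rw [Set.not_nonempty_iff_eq_empty] at hempty
    simp [lhsVal, hempty] at h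
  refine Nat.pos_of_ne_zero ?_
  rintro rfl
  simp [Matrix.trace] at hρ

lemma isUnsteerableDet_detAssemblage (hd : 0 < d) (g : X → A) :
    IsUnsteerableDet (detAssemblage d g) := by
  refine ⟨Pi.single g ((d : ℝ)⁻¹ • 1), fun l => ?_, ?_, fun a x => ?_⟩
  · rcases eq_or_ne l g with rfl | hl
    · simpa using PosSemidef.one.smul (by positivity : (0 : ℝ) ≤ (d : ℝ)⁻¹)
    · simpa [hl] using PosSemidef.zero
  · rw [Finset.sum_eq_single g (fun l _ hl => by simp [hl]) (by simp), Pi.single_eq_same,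
      trace_smul, trace_one, Fintype.card_fin, Complex.real_smul]
    push_cast
    field_simp
  · rw [Finset.sum_eq_single g (fun l _ hl => by simp [hl]) (by simp)]
    simp [detAssemblage]

lemma sum_re_trace_le_lhsVal {G : A → X → Matrix (Fin d) (Fin d) ℂ}
    (hG : ∀ a x, (G a x).PosSemidef) (hd : 0 < d) :
    ∑ a, ∑ x, (G a x).trace.re ≤ d * Fintype.card A * lhsVal G := by
  cases isEmpty_or_nonempty A
  · simp
  choose g hg using fun x => Finite.exists_max fun a => (G a x).trace.re
  have hdet : witVal G (detAssemblage d g) ≤ lhsVal G :=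
    le_csSup (bddAbove_witVal_isUnsteerableDet hG) ⟨_, isUnsteerableDet_detAssemblage hd g, rfl⟩
  calc ∑ a, ∑ x, (G a x).trace.re ≤ ∑ _a : A, ∑ x, (G (g x) x).trace.re :=
        Finset.sum_le_sum fun a _ => Finset.sum_le_sum fun x _ => hg x a
    _ = d * Fintype.card A * witVal G (detAssemblage d g) := by
        rw [witVal_detAssemblage, Finset.sum_const, Finset.card_univ, nsmul_eq_mul]
        field_simp
    _ ≤ d * Fintype.card A * lhsVal G := by gcongr

lemma bddAbove_steeringRatios {σ : A → X → Matrix (Fin d) (Fin d) ℂ}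
    (hσ : ∀ a x, (σ a x).PosSemidef) (htr : ∀ x, (∑ a, σ a x).trace = 1) :
    BddAbove {r : ℝ | ∃ G : A → X → Matrix (Fin d) (Fin d) ℂ,
      (∀ a x, (G a x).PosSemidef) ∧ 0 < lhsVal G ∧ r = witVal G σ / lhsVal G} := by
  refine ⟨d * Fintype.card A, ?_⟩
  rintro _ ⟨G, hG, hpos, rfl⟩
  rw [div_le_iff₀ hpos]
  exact (witVal_le_sum_re_trace hG hσ htr).trans
    (sum_re_trace_le_lhsVal hG (pos_of_lhsVal_pos hpos))

lemma maxEntProj_ratios_eq (σ : A → X → Matrix (Fin d) (Fin d) ℂ) :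
    {r : ℝ | ∃ F : A → X → Matrix (Fin d) (Fin d) ℂ,
        (∀ a x, (F a x).PosSemidef) ∧ 0 < mdiLhsVal (maxEntProj d) F ∧
        r = mdiVal (maxEntProj d) F σ / mdiLhsVal (maxEntProj d) F}
      = {r : ℝ | ∃ G : A → X → Matrix (Fin d) (Fin d) ℂ,
        (∀ a x, (G a x).PosSemidef) ∧ 0 < lhsVal G ∧ r = witVal G σ / lhsVal G} := by
  ext r
  refine exists_congr fun F => and_congr_right fun _ => ?_
  have hinv : 0 < lhsVal F → 0 < (d : ℝ)⁻¹ := fun h => by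
    have := pos_of_lhsVal_pos h
    positivity
  rw [mdiVal_maxEntProj, mdiLhsVal_maxEntProj]
  constructor
  · rintro ⟨hpos, rfl⟩
    have hL : 0 < lhsVal F := pos_of_mul_pos_right hpos (by positivity)
    exact ⟨hL, mul_div_mul_left _ _ (hinv hL).ne'⟩
  · rintro ⟨hL, rfl⟩
    exact ⟨mul_pos (hinv hL) hL, (mul_div_mul_left _ _ (hinv hL).ne').symm⟩

end Steering

theorem maxEnt_measurement_optimal_general
    {d : ℕ} {A X Y : Type} [Fintype A] [Fintype X] [Fintype Y]
    [DecidableEq A] [DecidableEq X]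
    (σ : A → X → Matrix (Fin d) (Fin d) ℂ)
    (hσ : ∀ a x, (σ a x).PosSemidef)
    (htr : ∀ x, (∑ a, σ a x).trace = 1)
    (ω : Y → Matrix (Fin d) (Fin d) ℂ) :
    (∀ F : A → X → Matrix (Fin d) (Fin d) ℂ, (∀ a x, (F a x).PosSemidef) →
      ∀ β : A → X → Y → ℝ, (∀ a x, F a x = ∑ y, β a x y • (ω y)ᵀ) →
      ∀ E : Matrix (Fin d × Fin d) (Fin d × Fin d) ℂ,
        E.PosSemidef → (1 - E).PosSemidef →
        0 < mdiLhsVal E F →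
        mdiVal E F σ / mdiLhsVal E F ≤
          sSup {r : ℝ | ∃ G : A → X → Matrix (Fin d) (Fin d) ℂ,
            (∀ a x, (G a x).PosSemidef) ∧ 0 < lhsVal G ∧
            r = witVal G σ / lhsVal G}) ∧
    (sSup {r : ℝ | ∃ F : A → X → Matrix (Fin d) (Fin d) ℂ,
        (∀ a x, (F a x).PosSemidef) ∧ 0 < mdiLhsVal (maxEntProj d) F ∧
        r = mdiVal (maxEntProj d) F σ / mdiLhsVal (maxEntProj d) F}
      = sSup {r : ℝ | ∃ G : A → X → Matrix (Fin d) (Fin d) ℂ,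
        (∀ a x, (G a x).PosSemidef) ∧ 0 < lhsVal G ∧
        r = witVal G σ / lhsVal G}) := by
  refine ⟨fun F hF _ _ E hE _ hpos => ?_, congrArg sSup (maxEntProj_ratios_eq σ)⟩
  rw [mdiLhsVal_eq_lhsVal] at hpos
  rw [mdiVal_eq_witVal, mdiLhsVal_eq_lhsVal]
  exact le_csSup (bddAbove_steeringRatios hσ htr)
    ⟨_, fun a x => posSemidef_inducedWitness hE (hF a x), hpos, rfl⟩

/-- Optimality of the maximally entangled measurement for MDI steering: for every POVM
element `E` the MDI ratio is at most the steering fraction, and the supremum of the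
ratios obtained with `E = |Φ+⟩⟨Φ+|` equals the steering fraction. -/
theorem maxEnt_measurement_optimal
    {d : ℕ} {A X Y : Type} [Fintype A] [Fintype X] [Fintype Y]
    [DecidableEq A] [DecidableEq X]
    (σ : A → X → Matrix (Fin d) (Fin d) ℂ)
    (hσ : ∀ a x, (σ a x).PosSemidef)
    (htr : ∀ x, (∑ a, σ a x).trace = 1)
    (ω : Y → Matrix (Fin d) (Fin d) ℂ)
    (hω : ∀ y, (ω y).IsHermitian)
    (hspan : ∀ M : Matrix (Fin d) (Fin d) ℂ, M.IsHermitian →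
      ∃ c : Y → ℝ, M = ∑ y, c y • ω y) :
    (∀ F : A → X → Matrix (Fin d) (Fin d) ℂ, (∀ a x, (F a x).PosSemidef) →
      ∀ β : A → X → Y → ℝ, (∀ a x, F a x = ∑ y, β a x y • (ω y)ᵀ) →
      ∀ E : Matrix (Fin d × Fin d) (Fin d × Fin d) ℂ,
        E.PosSemidef → (1 - E).PosSemidef →
        0 < mdiLhsVal E F →
        mdiVal E F σ / mdiLhsVal E F ≤
          sSup {r : ℝ | ∃ G : A → X → Matrix (Fin d) (Fin d) ℂ,
            (∀ a x, (G a x).PosSemidef) ∧ 0 < lhsVal G ∧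
            r = witVal G σ / lhsVal G}) ∧
    (sSup {r : ℝ | ∃ F : A → X → Matrix (Fin d) (Fin d) ℂ,
        (∀ a x, (F a x).PosSemidef) ∧ 0 < mdiLhsVal (maxEntProj d) F ∧
        r = mdiVal (maxEntProj d) F σ / mdiLhsVal (maxEntProj d) F}
      = sSup {r : ℝ | ∃ G : A → X → Matrix (Fin d) (Fin d) ℂ,
        (∀ a x, (G a x).PosSemidef) ∧ 0 < lhsVal G ∧
        r = witVal G σ / lhsVal G}) :=
  maxEnt_measurement_optimal_general σ hσ htr ω
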